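/- If A = (i..j), i.e. A is the full open interval, then K_{i,j}(A) = Π_{t ∈ (i..j]} (y_t - x_i). -/

import Mathlib

open Finset

noncomputable section

/-- The polynomial ring `ℤ[xₜ, y_q : t, q ∈ ℤ]`. -/
abbrev MyR : Type := MvPolynomial (ℤ ⊕ ℤ) ℤ

/-- Its field of fractions. -/
abbrev MyFF : Type := FractionRing MyR

/-- The variable `x_t`. -/
def Xv (t : ℤ) : MyFF := algebraMap MyR MyFF (MvPolynomial.X (Sum.inl t))

/-- The variable `y_q`. -/
def Yv (q : ℤ) : MyFF := algebraMap MyR MyFF (MvPolynomial.X (Sum.inr q))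

/-- `D_i(t) = max {s ∈ D ∪ {i} : s < t}`. -/
def Di (i : ℤ) (D : Finset ℤ) (t : ℤ) : ℤ :=
  WithBot.unbotD i (((insert i D).filter (fun s => s < t)).max)

/-- `H_{i,j}(A,B)` viewed in the fraction field. -/
def Hfr (i : ℤ) (A B : Finset ℤ) : MyFF :=
  ∑ D ∈ (B \ A).powerset, (-1 : MyFF) ^ D.card *
    (∏ t ∈ A, (Xv t - Xv (Di i D t))) / ∏ t ∈ B, (Xv t - Xv (Di i D t))

/-- `K_{i,j}(A) = Σ_{B ⊆ (i..j)} H_{i,j}(A,B) Π_{t ∈ B ∪ {i}} (y_{t+1} - x_t)`. -/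
def Kfr (i j : ℤ) (A : Finset ℤ) : MyFF :=
  ∑ B ∈ (Finset.Ioo i j).powerset, Hfr i A B * ∏ t ∈ insert i B, (Yv (t + 1) - Xv t)

lemma Di_empty (i t : ℤ) : Di i ∅ t = i := by
  simp only [Di, insert_empty_eq, filter_singleton]
  split <;> simp

lemma Xv_injective : Function.Injective Xv :=
  (IsFractionRing.injective MyR MyFF).comp (MvPolynomial.X_injective.comp Sum.inl_injective)

lemma Hfr_of_subset {i : ℤ} {A B : Finset ℤ} (hBA : B ⊆ A) (hiB : i ∉ B) :
    Hfr i A B = ∏ t ∈ A \ B, (Xv t - Xv i) := by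
  have hB : ∏ t ∈ B, (Xv t - Xv i) ≠ 0 := prod_ne_zero_iff.mpr fun t ht =>
    sub_ne_zero.mpr (Xv_injective.ne (ne_of_mem_of_not_mem ht hiB))
  rw [Hfr, sdiff_eq_empty_iff_subset.mpr hBA, powerset_empty, sum_singleton]
  simp only [Di_empty, card_empty, pow_zero, one_mul]
  rw [← prod_sdiff hBA, mul_div_assoc, div_self hB, mul_one]

/-- Expanding `∏ ((y_{t+1} - x_t) + (x_t - x_i))` over subsets yields exactly the terms of `K`. -/
lemma Kfr_Ioo (i j : ℤ) :
    Kfr i j (Ioo i j) = ∏ t ∈ insert i (Ioo i j), (Yv (t + 1) - Xv i) := by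
  have hterm : ∀ B ∈ (Ioo i j).powerset,
      Hfr i (Ioo i j) B * ∏ t ∈ insert i B, (Yv (t + 1) - Xv t) =
        (Yv (i + 1) - Xv i) *
          ((∏ t ∈ B, (Yv (t + 1) - Xv t)) * ∏ t ∈ Ioo i j \ B, (Xv t - Xv i)) := by
    intro B hB
    have hiB : i ∉ B := fun h => left_notMem_Ioo (mem_powerset.mp hB h)
    rw [Hfr_of_subset (mem_powerset.mp hB) hiB, prod_insert hiB]
    ring
  rw [Kfr, sum_congr rfl hterm, ← mul_sum, ← prod_add, prod_insert left_notMem_Ioo]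
  simp only [sub_add_sub_cancel]

/-- If `A = (i..j)` then `K_{i,j}(A) = Π_{t ∈ (i..j]} (y_t - x_i)`. -/
theorem stmt2 (i j : ℤ) (hij : i < j) :
    Kfr i j (Finset.Ioo i j) = ∏ t ∈ Finset.Ioc i j, (Yv t - Xv i) := by
  rw [Kfr_Ioo, Ioo_insert_left hij, prod_Ico_add' (fun t => Yv t - Xv i),
    Ico_add_one_add_one_eq_Ioc]

end
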